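/- arXiv:2101.00025 — 2 statements merged into one kernel-verified Lean document; each statement's English description precedes it below -/
import Mathlib

section
/- Let s ≥ 32, λ ∈ (0, 1), ρ ∈ (0, 1), and set λ₁ = (1+λ)/2, ε = (ρ/8)(1 − λ₁²), and v_j = 2(3 + 2j)/(3 + 16s) for 1 ≤ j ≤ 8s. Define Ψ(t) = min{ξ(t), η_1(t) + ε·v_1, …, η_{8s}(t) + ε·v_{8s}}. Assume the Phase-I standing bounds: for all t ≥ 0, 0 ≤ δ(t) ≤ 0.2/s, γ_j(t) > 0 for all 1 ≤ j ≤ 8s, γ_{j−1}(t)/γ_j(t) ≥ 1/2 for all 2 ≤ j ≤ 8s, γ_1(t) ≤ 1/s, 1 − 2/s ≤ Γ(t) ≤ 1, 1/s − δ(t) > 0, ξ(t) ≥ ρ, η(t) ≥ ρ, and η_j(t) ≥ ρ for all 1 ≤ j ≤ 8s. Then at every time t ≥ 0 with Ψ(t) < λ₁, the lower right Dini derivative of Ψ at t is at least ε/(9s). -/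
/-!
`Ψ` is the minimum of finitely many functions that are differentiable at `t`, so its lower
right Dini derivative is at least the smallest derivative among the components attaining the
minimum. Every advantage `a = (q - 2p)/q` satisfies `a' = ((1 - a) q' - 2 p') / q`; along the
system the terms in `R` cancel and
  `ξ' = Γ (1 - ξ²) η / 4 + δ Γ (η - ξ) / (1/s - δ)`,
  `η₁' = Γ (1/s - δ) (ξ - η₁) / (2 γ₁)`,
  `η_j' = γ_{j-1} (η_{j-1} - η_j) / γ_j`.
If `ξ` attains the minimum, then `η`, the `γ`-weighted mean of the `η_j`, is at least `ξ - 2ε`,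
and `ξ' ≥ 15ε/8 - ε/2`. If `η_j + ε v_j` attains it, it lies below the preceding component, so
`ξ - η₁ ≥ ε v₁` resp. `η_{j-1} - η_j ≥ ε (v_j - v_{j-1})`, both of order `ε/s`; the bounds
`γ₁ ≤ 1/s` and `γ_{j-1}/γ_j ≥ 1/2` turn these gaps into `η_j' > ε/(9s)`.
-/

open Filter Topology

section RightDini

variable {f g Ψ : ℝ → ℝ} {t c d m : ℝ}

lemma eventually_add_mul_le_of_hasDerivAt (hf : HasDerivAt f d t) (hcd : c < d) :
    ∀ᶠ h in 𝓝[>] (0 : ℝ), f t + c * h ≤ f (t + h) := by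
  filter_upwards [self_mem_nhdsWithin,
    hf.tendsto_slope_zero_right.eventually (eventually_gt_nhds hcd)] with h (hh : 0 < h) hlt
  rw [smul_eq_mul, lt_inv_mul_iff₀ hh] at hlt
  linarith

lemma eventually_add_mul_le_of_lt (hf : ContinuousAt f t) (hm : m < f t) (c : ℝ) :
    ∀ᶠ h in 𝓝[>] (0 : ℝ), m + c * h ≤ f (t + h) := by
  have hcont : ContinuousAt (fun h => f (t + h) - c * h) 0 :=
    (hf.comp_of_eq (by fun_prop) (add_zero t)).sub (by fun_prop)
  filter_upwards [nhdsWithin_le_nhds (hcont.eventually (eventually_gt_nhds (by simpa using hm)))]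
    with h hh
  linarith

lemma eventually_add_mul_le_of_hasDerivAt_of_le (hf : HasDerivAt f d t) (hm : m ≤ f t)
    (hd : f t = m → c < d) : ∀ᶠ h in 𝓝[>] (0 : ℝ), m + c * h ≤ f (t + h) := by
  rcases hm.lt_or_eq with hlt | rfl
  · exact eventually_add_mul_le_of_lt hf.continuousAt hlt c
  · exact eventually_add_mul_le_of_hasDerivAt hf (hd rfl)

lemma le_liminf_slope_of_le_of_hasDerivAt (hΨg : ∀ x, Ψ x ≤ g x) (hgt : g t = Ψ t)
    (hg : HasDerivAt g d t) (hlow : ∀ᶠ h in 𝓝[>] (0 : ℝ), Ψ t + c * h ≤ Ψ (t + h)) :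
    c ≤ liminf (fun h => (Ψ (t + h) - Ψ t) / h) (𝓝[>] 0) := by
  -- a real `liminf` is only meaningful for quotients bounded above: `g` provides the bound
  refine le_liminf_of_le (isCoboundedUnder_ge_of_eventually_le _ (x := d + 1) ?_) ?_
  · filter_upwards [self_mem_nhdsWithin,
      eventually_add_mul_le_of_hasDerivAt hg.neg (neg_lt_neg (lt_add_one d))]
      with h (hh : 0 < h) hup
    rw [Pi.neg_apply, Pi.neg_apply] at hup
    rw [div_le_iff₀ hh]
    linarith [hΨg (t + h)]
  · filter_upwards [self_mem_nhdsWithin, hlow] with h (hh : 0 < h) hh'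
    rw [le_div_iff₀ hh]
    linarith

theorem le_liminf_slope_of_eq_min_inf' {ι : Type*} {S : Finset ι} {hS : S.Nonempty}
    {f : ι → ℝ → ℝ} (hΨ : ∀ x, Ψ x = min (g x) (S.inf' hS fun i => f i x))
    (hg : ∃ d, HasDerivAt g d t ∧ (g t = Ψ t → c < d))
    (hf : ∀ i ∈ S, ∃ d, HasDerivAt (f i) d t ∧ (f i t = Ψ t → c < d)) :
    c ≤ liminf (fun h => (Ψ (t + h) - Ψ t) / h) (𝓝[>] 0) := by
  obtain ⟨d₀, hd₀, hgt⟩ := hg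
  choose! d hd hft using hf
  have hleg : ∀ x, Ψ x ≤ g x := fun x => (hΨ x).trans_le (min_le_left _ _)
  have hlef : ∀ i ∈ S, ∀ x, Ψ x ≤ f i x :=
    fun i hi x => (hΨ x).trans_le ((min_le_right _ _).trans (S.inf'_le _ hi))
  have hlow : ∀ᶠ h in 𝓝[>] (0 : ℝ), Ψ t + c * h ≤ Ψ (t + h) := by
    filter_upwards [eventually_add_mul_le_of_hasDerivAt_of_le hd₀ (hleg t) hgt,
      (eventually_all_finset S).2 fun i hi =>
        eventually_add_mul_le_of_hasDerivAt_of_le (hd i hi) (hlef i hi t) (hft i hi)] with h hg hf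
    rw [hΨ (t + h)]
    exact le_min hg (Finset.le_inf' hS _ hf)
  obtain ⟨k, hk, hkt⟩ := S.exists_mem_eq_inf' hS fun i => f i t
  rcases min_choice (g t) (S.inf' hS fun i => f i t) with hmin | hmin
  · exact le_liminf_slope_of_le_of_hasDerivAt hleg (by rw [hΨ, hmin]) hd₀ hlow
  · exact le_liminf_slope_of_le_of_hasDerivAt (hlef k hk) (by rw [hΨ, hmin, hkt]) (hd k hk) hlow

end RightDini

-- `ξ = advantage (1/s - δ) α`, `η_j = advantage γ_j β_j`, `η = advantage Γ B`
noncomputable def advantage (q p : ℝ) : ℝ := (q - 2 * p) / q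

lemma two_mul_eq_mul_one_sub_advantage {q p : ℝ} (hq : q ≠ 0) :
    2 * p = q * (1 - advantage q p) := by
  unfold advantage; field_simp; ring

lemma hasDerivAt_advantage {p q : ℝ → ℝ} {p' q' t : ℝ} (hp : HasDerivAt p p' t)
    (hq : HasDerivAt q q' t) (hq0 : q t ≠ 0) :
    HasDerivAt (fun x => advantage (q x) (p x))
      (((1 - advantage (q t) (p t)) * q' - 2 * p') / q t) t := by
  have h : HasDerivAt (fun x => (q x - 2 * p x) / q x) _ t :=
    (hq.sub (hp.const_mul 2)).div hq hq0
  refine h.congr_deriv ?_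
  rw [advantage, Pi.sub_apply]; field_simp; ring

lemma le_advantage_sum {ι : Type*} {S : Finset ι} (hS : S.Nonempty) {p q : ι → ℝ} {m : ℝ}
    (hq : ∀ i ∈ S, 0 < q i) (hm : ∀ i ∈ S, m ≤ advantage (q i) (p i)) :
    m ≤ advantage (∑ i ∈ S, q i) (∑ i ∈ S, p i) := by
  rw [advantage, le_div_iff₀ (Finset.sum_pos hq hS), Finset.mul_sum, Finset.mul_sum,
    ← Finset.sum_sub_distrib]
  refine Finset.sum_le_sum fun i hi => ?_
  have := hm i hi
  rw [advantage, le_div_iff₀ (hq i hi)] at this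
  linarith

lemma hasDerivAt_xi {α δ ξ : ℝ → ℝ} {s B Γ η t : ℝ}
    (hξ : ∀ x, ξ x = advantage (1/s - δ x) (α x)) (hη : η = advantage Γ B)
    (hα : HasDerivAt α (-(α t / 2) * (Γ - B) + δ t * B) t)
    (hδ : HasDerivAt δ ((α t / 2) * (Γ - B) + ((1/s - α t - δ t)/2) * B - δ t * Γ) t)
    (hq : 1/s - δ t ≠ 0) (hΓ : Γ ≠ 0) :
    HasDerivAt ξ (Γ * (1 - ξ t ^ 2) * η / 4 + δ t * Γ * (η - ξ t) / (1/s - δ t)) t := by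
  obtain rfl := funext hξ
  refine (hasDerivAt_advantage hα (hδ.const_sub (1/s)) hq).congr_deriv ?_
  beta_reduce
  have hα2 := two_mul_eq_mul_one_sub_advantage (p := α t) hq
  have hB2 := two_mul_eq_mul_one_sub_advantage (p := B) hΓ
  rw [← hη] at hB2
  generalize advantage (1/s - δ t) (α t) = ξ at hα2 ⊢
  generalize α t = a at hα2 ⊢
  obtain rfl : a = (1/s - δ t) * (1 - ξ) / 2 := by linarith
  obtain rfl : B = Γ * (1 - η) / 2 := by linarith
  field_simp
  ring

lemma hasDerivAt_eta_one {β₁ γ₁ η : ℝ → ℝ} {s a d Γ R ξ t : ℝ}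
    (hη : ∀ x, η x = advantage (γ₁ x) (β₁ x)) (hξ : ξ = advantage (1/s - d) a)
    (hβ : HasDerivAt β₁ (-(β₁ t) * R + (a / 2) * Γ) t)
    (hγ : HasDerivAt γ₁ (-(γ₁ t) * R + (1/(2*s) - d / 2) * Γ) t)
    (hq : 1/s - d ≠ 0) (hγ0 : γ₁ t ≠ 0) :
    HasDerivAt η (Γ * (1/s - d) * (ξ - η t) / (2 * γ₁ t)) t := by
  obtain rfl := funext hη
  refine (hasDerivAt_advantage hβ hγ hγ0).congr_deriv ?_
  beta_reduce
  have ha2 := two_mul_eq_mul_one_sub_advantage (p := a) hq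
  have hβ2 := two_mul_eq_mul_one_sub_advantage (p := β₁ t) hγ0
  rw [← hξ] at ha2
  generalize advantage (γ₁ t) (β₁ t) = η at hβ2 ⊢
  generalize β₁ t = b at hβ2 ⊢
  obtain rfl : a = (1/s - d) * (1 - ξ) / 2 := by linarith
  obtain rfl : b = γ₁ t * (1 - η) / 2 := by linarith
  field_simp
  ring

lemma hasDerivAt_eta_chain {p q η : ℝ → ℝ} {p₀ q₀ η₀ R t : ℝ}
    (hη : ∀ x, η x = advantage (q x) (p x)) (hη₀ : η₀ = advantage q₀ p₀)
    (hp : HasDerivAt p (p₀ - p t * R) t) (hq : HasDerivAt q (q₀ - q t * R) t)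
    (hq0 : q t ≠ 0) (hq₀ : q₀ ≠ 0) :
    HasDerivAt η (q₀ * (η₀ - η t) / q t) t := by
  obtain rfl := funext hη
  refine (hasDerivAt_advantage hp hq hq0).congr_deriv ?_
  beta_reduce
  have hp₀ := two_mul_eq_mul_one_sub_advantage (p := p₀) hq₀
  have hp2 := two_mul_eq_mul_one_sub_advantage (p := p t) hq0
  rw [← hη₀] at hp₀
  generalize advantage (q t) (p t) = η at hp2 ⊢
  generalize p t = b at hp2 ⊢
  obtain rfl : p₀ = q₀ * (1 - η₀) / 2 := by linarith
  obtain rfl : b = q t * (1 - η) / 2 := by linarith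
  field_simp
  ring

noncomputable def offset (s : ℝ) (j : ℕ) : ℝ := 2 * (3 + 2 * j) / (3 + 16 * s)

lemma offset_one (s : ℝ) : offset s 1 = 10 / (3 + 16 * s) := by
  rw [offset]; norm_num

lemma offset_sub_offset_pred {j : ℕ} (s : ℝ) (hj : 1 ≤ j) :
    offset s j - offset s (j - 1) = 4 / (3 + 16 * s) := by
  rw [offset, offset, Nat.cast_sub hj]
  ring

lemma offset_le_two {s : ℝ} {j : ℕ} (hs : 0 ≤ s) (hj : j ≤ 8 * s) : offset s j ≤ 2 := by
  rw [offset, div_le_iff₀ (by positivity)]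
  linarith

lemma lt_deriv_xi {s δ Γ ξ η ε ρ l : ℝ} (hs : 1 ≤ s) (hδ0 : 0 ≤ δ) (hδ : 5 * δ ≤ 1 / s)
    (hΓ : 15 / 16 ≤ Γ) (hΓ1 : Γ ≤ 1) (hρ : 0 < ρ) (hε : 0 < ε) (hρε : ρ * (1 - l ^ 2) = 8 * ε)
    (hξρ : ρ ≤ ξ) (hξl : ξ < l) (hηρ : ρ ≤ η) (hηξ : ξ - 2 * ε ≤ η) :
    ε / (9 * s) < Γ * (1 - ξ ^ 2) * η / 4 + δ * Γ * (η - ξ) / (1 / s - δ) := by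
  have hq : 0 < 1 / s - δ := by have := one_div_pos.2 (by linarith : 0 < s); linarith
  have hl : 0 < 1 - l ^ 2 := pos_of_mul_pos_right (hρε ▸ by positivity) hρ.le
  have hξsq : 1 - l ^ 2 ≤ 1 - ξ ^ 2 := by
    have := pow_le_pow_left₀ (hρ.le.trans hξρ) hξl.le 2
    linarith
  have hdrift : 15 * ε / 8 ≤ Γ * (1 - ξ ^ 2) * η / 4 :=
    calc 15 * ε / 8 = 15 / 16 * ((1 - l ^ 2) * ρ) / 4 := by linarith
      _ ≤ Γ * ((1 - ξ ^ 2) * η) / 4 := by gcongr; linarith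
      _ = Γ * (1 - ξ ^ 2) * η / 4 := by ring
  have hcross : -(ε / 2) ≤ δ * Γ * (η - ξ) / (1 / s - δ) := by
    rw [le_div_iff₀ hq]
    have h1 : δ * Γ * (-(2 * ε)) ≤ δ * Γ * (η - ξ) :=
      mul_le_mul_of_nonneg_left (by linarith) (by positivity)
    have h2 : δ * Γ * (2 * ε) ≤ δ * (2 * ε) := by
      have := mul_le_mul_of_nonneg_left hΓ1 hδ0
      nlinarith
    nlinarith
  have hsmall : ε / (9 * s) < 11 * ε / 8 := by
    rw [div_lt_iff₀ (by positivity)]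
    nlinarith
  linarith

lemma lt_deriv_eta_one {s δ Γ γ ξ η ε : ℝ} (hs : 1 ≤ s) (hδ : 5 * δ ≤ 1 / s) (hΓ : 15 / 16 ≤ Γ)
    (hγ : 0 < γ) (hγs : γ ≤ 1 / s) (hε : 0 < ε) (hgap : ε * offset s 1 ≤ ξ - η) :
    ε / (9 * s) < Γ * (1 / s - δ) * (ξ - η) / (2 * γ) := by
  have hs0 : 0 < s := by linarith
  have hq : 4 / (5 * s) ≤ 1 / s - δ := by
    have : 1 / s - 4 / (5 * s) = 1 / s / 5 := by field_simp; ring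
    linarith
  rw [offset_one] at hgap
  have hlow :
      15 / 16 * (4 / (5 * s)) * (ε * (10 / (3 + 16 * s))) ≤ Γ * (1 / s - δ) * (ξ - η) := by
    gcongr
    exact mul_nonneg (by linarith) ((by positivity : (0:ℝ) ≤ 4 / (5 * s)).trans hq)
  rw [lt_div_iff₀ (by positivity)]
  calc ε / (9 * s) * (2 * γ) ≤ ε / (9 * s) * (2 * (1 / s)) := by gcongr
    _ < 15 / 16 * (4 / (5 * s)) * (ε * (10 / (3 + 16 * s))) := by
      rw [← sub_pos]
      field_simp
      nlinarith
    _ ≤ _ := hlow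

lemma lt_deriv_eta_chain {s γ₀ γ η₀ η ε : ℝ} {j : ℕ} (hs : 2 ≤ s) (hj : 1 ≤ j)
    (hratio : 1 / 2 ≤ γ₀ / γ) (hε : 0 < ε)
    (hgap : ε * (offset s j - offset s (j - 1)) ≤ η₀ - η) :
    ε / (9 * s) < γ₀ * (η₀ - η) / γ := by
  rw [offset_sub_offset_pred s hj] at hgap
  calc ε / (9 * s) < 1 / 2 * (ε * (4 / (3 + 16 * s))) := by
        rw [← sub_pos]; field_simp; nlinarith
    _ ≤ γ₀ / γ * (η₀ - η) := by gcongr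
    _ = γ₀ * (η₀ - η) / γ := by ring

theorem stmt_11
    (s : ℕ) (hs : 32 ≤ s)
    (α δ : ℝ → ℝ) (β γ : ℕ → ℝ → ℝ) (B Γ R : ℝ → ℝ)
    (hB : ∀ t, B t = ∑ j ∈ Finset.Icc 1 (8*s), β j t)
    (hΓ : ∀ t, Γ t = ∑ j ∈ Finset.Icc 1 (8*s), γ j t)
    (hderivα : ∀ t : ℝ, 0 ≤ t → HasDerivAt α (-(α t / 2) * (Γ t - B t) + δ t * B t) t)
    (hderivδ : ∀ t : ℝ, 0 ≤ t →
      HasDerivAt δ ((α t / 2) * (Γ t - B t) + ((1/(s:ℝ) - α t - δ t)/2) * B t - δ t * Γ t) t)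
    (hderivβ1 : ∀ t : ℝ, 0 ≤ t → HasDerivAt (β 1) (-(β 1 t) * R t + (α t / 2) * Γ t) t)
    (hderivβ : ∀ j, 2 ≤ j → j ≤ 8*s → ∀ t : ℝ, 0 ≤ t →
      HasDerivAt (β j) (β (j-1) t - β j t * R t) t)
    (hderivγ1 : ∀ t : ℝ, 0 ≤ t →
      HasDerivAt (γ 1) (-(γ 1 t) * R t + (1/(2*(s:ℝ)) - δ t / 2) * Γ t) t)
    (hderivγ : ∀ j, 2 ≤ j → j ≤ 8*s → ∀ t : ℝ, 0 ≤ t →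
      HasDerivAt (γ j) (γ (j-1) t - γ j t * R t) t)
    (ξ η : ℝ → ℝ) (ηj : ℕ → ℝ → ℝ)
    (hξ : ∀ t, ξ t = (1/(s:ℝ) - δ t - 2 * α t) / (1/(s:ℝ) - δ t))
    (hηj : ∀ j, 1 ≤ j → j ≤ 8*s → ∀ t, ηj j t = (γ j t - 2 * β j t) / γ j t)
    (hη : ∀ t, η t = (Γ t - 2 * B t) / Γ t)
    (lam ρ lam₁ ε : ℝ) (hlam : 0 < lam) (hlam1 : lam < 1) (hρ : 0 < ρ)
    (hlam₁ : lam₁ = (1 + lam)/2) (hε : ε = (ρ/8) * (1 - lam₁^2))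
    (v : ℕ → ℝ) (hv : ∀ j, v j = 2*(3 + 2*(j:ℝ))/(3 + 16*(s:ℝ)))
    (Ψ : ℝ → ℝ)
    (hΨ : ∀ t, Ψ t = min (ξ t)
      ((Finset.Icc 1 (8*s)).inf' (Finset.nonempty_Icc.mpr (by omega))
        (fun j => ηj j t + ε * v j)))
    (hδb : ∀ t : ℝ, 0 ≤ t → 0 ≤ δ t ∧ δ t ≤ 0.2 / (s:ℝ))
    (hγpos : ∀ t : ℝ, 0 ≤ t → ∀ j, 1 ≤ j → j ≤ 8*s → 0 < γ j t)
    (hγratio : ∀ t : ℝ, 0 ≤ t → ∀ j, 2 ≤ j → j ≤ 8*s → 1/2 ≤ γ (j-1) t / γ j t)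
    (hγ1b : ∀ t : ℝ, 0 ≤ t → γ 1 t ≤ 1/(s:ℝ))
    (hΓb : ∀ t : ℝ, 0 ≤ t → 1 - 2/(s:ℝ) ≤ Γ t ∧ Γ t ≤ 1)
    (hξρ : ∀ t : ℝ, 0 ≤ t → ρ ≤ ξ t)
    (hηρ : ∀ t : ℝ, 0 ≤ t → ρ ≤ η t) :
    ∀ t : ℝ, 0 ≤ t → Ψ t < lam₁ →
      ε / (9 * (s:ℝ)) ≤
        Filter.liminf (fun h : ℝ => (Ψ (t + h) - Ψ t) / h)
          (nhdsWithin 0 (Set.Ioi (0:ℝ))) := by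
  intro t ht hΨt
  obtain rfl : v = offset s := funext hv
  have hsR : (32 : ℝ) ≤ s := by exact_mod_cast hs
  have hε0 : 0 < ε := by
    have : 0 < 1 - lam₁ ^ 2 := by rw [hlam₁]; nlinarith
    rw [hε]; positivity
  obtain ⟨hδ0, hδs⟩ := hδb t ht
  obtain ⟨hΓs, hΓ1⟩ := hΓb t ht
  have hδ5 : 5 * δ t ≤ 1 / s := by
    rw [le_div_iff₀ (by positivity)]; rw [le_div_iff₀ (by positivity)] at hδs; linarith
  have hΓ16 : 15 / 16 ≤ Γ t := by
    have : 2 / (s : ℝ) ≤ 1 / 16 := by rw [div_le_iff₀ (by positivity)]; linarith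
    linarith
  have hq : 0 < 1 / (s : ℝ) - δ t := by
    have := one_div_pos.2 (by positivity : (0 : ℝ) < s); linarith
  have hΓ0 : 0 < Γ t := by linarith
  have hΨle : ∀ j ∈ Finset.Icc 1 (8*s), Ψ t ≤ ηj j t + ε * offset s j := fun j hj =>
    (hΨ t).trans_le ((min_le_right _ _).trans (Finset.inf'_le _ hj))
  have hηΨ : Ψ t - 2 * ε ≤ η t := by
    rw [hη t, hΓ t, hB t]
    refine le_advantage_sum (q := fun j => γ j t) (p := fun j => β j t)
      (Finset.nonempty_Icc.2 (by omega))
      (fun j hj => hγpos t ht j (Finset.mem_Icc.1 hj).1 (Finset.mem_Icc.1 hj).2) fun j hj => ?_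
    obtain ⟨hj1, hj8⟩ := Finset.mem_Icc.1 hj
    have hvj := offset_le_two (s := s) (by positivity) (by exact_mod_cast hj8)
    rw [← show ηj j t = advantage (γ j t) (β j t) from hηj j hj1 hj8 t]
    linarith [hΨle j hj, mul_le_mul_of_nonneg_left hvj hε0.le]
  refine le_liminf_slope_of_eq_min_inf' hΨ
    ⟨_, hasDerivAt_xi hξ (hη t) (hderivα t ht) (hderivδ t ht) hq.ne' hΓ0.ne', fun hact =>
      lt_deriv_xi (by linarith) hδ0 hδ5 hΓ16 hΓ1 hρ hε0 (by rw [hε]; ring) (hξρ t ht)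
        (hact.trans_lt hΨt) (hηρ t ht) (by linarith)⟩ fun j hj => ?_
  obtain ⟨hj1, hj8⟩ := Finset.mem_Icc.1 hj
  have hγj := hγpos t ht j hj1 hj8
  rcases hj1.eq_or_lt with rfl | hj2
  · refine ⟨_, (hasDerivAt_eta_one (hηj 1 le_rfl hj8) (hξ t) (hderivβ1 t ht) (hderivγ1 t ht)
      hq.ne' hγj.ne').add_const _, fun hact =>
      lt_deriv_eta_one (by linarith) hδ5 hΓ16 hγj (hγ1b t ht) hε0 ?_⟩
    linarith [(hΨ t).trans_le (min_le_left _ _)]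
  · have hj1' : 1 ≤ j - 1 := by omega
    have hj8' : j - 1 ≤ 8 * s := by omega
    refine ⟨_, (hasDerivAt_eta_chain (hηj j hj1 hj8) (hηj (j-1) hj1' hj8' t)
      (hderivβ j hj2 hj8 t ht) (hderivγ j hj2 hj8 t ht) hγj.ne'
      (hγpos t ht (j-1) hj1' hj8').ne').add_const _, fun hact =>
      lt_deriv_eta_chain (by linarith) hj1 (hγratio t ht j hj2 hj8) hε0 ?_⟩
    linarith [hΨle (j - 1) (Finset.mem_Icc.2 ⟨hj1', hj8'⟩)]
end

section
/- Let s ≥ 32, let T₁ ≥ 0, and define Λ₂(t) = α(t) + δ(t)/16 + β(t)/4. Assume that Λ₂(T₁) ≤ 1 and that for all t ≥ T₁ the variables satisfy α(t) ≥ 0, δ(t) ≥ 0, β_j(t) ≥ 0 for all 1 ≤ j ≤ 8s, 1 − 2/s ≤ Γ(t) ≤ 1, R(t) ≥ 1 + 1/(4s), and β(t) ≤ 1/64. Then for all t ≥ T₁ and all 1 ≤ j ≤ 8s one has β_j(t) ≤ 4·e^{−(t−T₁)/(8s)} and β(t) ≤ 32s·e^{−(t−T₁)/(8s)}; in particular,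 β(t) ≤ 32s·e^{−8s} for all t ≥ T₁ + 64s². -/
/-!
`Λ = α + δ/16 + β/4` is a Lyapunov function: summing the `β`-chain, the transfers
`β_{j-1} → β_j` telescope, so `β' ≤ αΓ/2 - (R - 1)β ≤ αΓ/2 - β/(4s)`, and with the bounds on
`Γ` and `β` this gives `Λ' ≤ -Λ/(8s)`. Grönwall then yields `Λ(t) ≤ e^{-(t-T₁)/(8s)}`, and each
`β_j ≤ β ≤ 4Λ`.
-/

open Finset Real

theorem le_mul_exp_of_hasDerivAt_le_neg_mul {f f' : ℝ → ℝ} {a c t : ℝ}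
    (hf : ∀ x, a ≤ x → HasDerivAt f (f' x) x) (hf' : ∀ x, a ≤ x → f' x ≤ -c * f x)
    (ht : a ≤ t) : f t ≤ f a * exp (-c * (t - a)) := by
  rw [← gronwallBound_ε0]
  refine le_gronwallBound_of_liminf_deriv_right_le (b := t) (f' := f') (fun x hx => ?_)
    (fun x hx r hr => ?_) le_rfl (fun x hx => by simpa using hf' x hx.1) t ⟨ht, le_rfl⟩
  · exact (hf x hx.1).continuousAt.continuousWithinAt
  · exact (hf x hx.1).hasDerivWithinAt.liminf_right_slope_le hr

theorem hasDerivAt_sum_Icc_of_chain {β : ℕ → ℝ → ℝ} {ι r t : ℝ} {n : ℕ} (hn : 1 ≤ n)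
    (h1 : HasDerivAt (β 1) (-(β 1 t) * r + ι) t)
    (h : ∀ j, 2 ≤ j → j ≤ n → HasDerivAt (β j) (β (j - 1) t - β j t * r) t) :
    HasDerivAt (fun x => ∑ j ∈ Icc 1 n, β j x)
      (ι - (∑ j ∈ Icc 1 n, β j t) * r + ∑ j ∈ Ico 1 n, β j t) t := by
  induction n, hn using Nat.le_induction with
  | base => simpa using h1.congr_deriv (by ring)
  | succ n hn ih =>
    have hsum : (fun x => ∑ j ∈ Icc 1 (n + 1), β j x)
        = fun x => (∑ j ∈ Icc 1 n, β j x) + β (n + 1) x := by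
      funext x; exact sum_Icc_succ_top (by omega) _
    rw [hsum, sum_Icc_succ_top (by omega), sum_Ico_succ_top hn]
    have hlast := h (n + 1) (by omega) le_rfl
    rw [Nat.add_sub_cancel] at hlast
    exact ((ih fun j hj hjn => h j hj (by omega)).add hlast).congr_deriv (by ring)

theorem lyapunov_deriv_le {σ a d b G r p : ℝ} (hσ : 32 ≤ σ) (ha : 0 ≤ a) (hd : 0 ≤ d)
    (hb : 0 ≤ b) (hb1 : b ≤ 1 / 64) (hG : 1 - 2 / σ ≤ G)
    (hr : 1 + 1 / (4 * σ) ≤ r) (hp : p ≤ b) :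
    (-(a / 2) * (G - b) + d * b)
      + ((a / 2) * (G - b) + ((1 / σ - a - d) / 2) * b - d * G) / 16
      + ((a / 2) * G - b * r + p) / 4 ≤ -(1 / (8 * σ)) * (a + d / 16 + b / 4) := by
  have he : 1 / σ ≤ 1 / 32 := one_div_le_one_div_of_le (by norm_num) hσ
  rw [show 2 / σ = 2 * (1 / σ) by ring] at hG
  rw [show 1 / (4 * σ) = (1 / σ) / 4 by ring] at hr
  rw [show 1 / (8 * σ) = (1 / σ) / 8 by ring]
  generalize 1 / σ = e at *
  nlinarith [mul_le_mul_of_nonneg_left hr hb, mul_nonneg ha (sub_nonneg.2 hG),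
    mul_nonneg ha (sub_nonneg.2 hb1), mul_nonneg ha (sub_nonneg.2 he),
    mul_nonneg hd (sub_nonneg.2 hG), mul_nonneg hd (sub_nonneg.2 hb1),
    mul_nonneg hd (sub_nonneg.2 he), mul_nonneg hd hb, mul_nonneg ha hb]

theorem stmt_14_general
    (s : ℕ) (hs : 32 ≤ s)
    (α δ : ℝ → ℝ) (β : ℕ → ℝ → ℝ) (B Γ R : ℝ → ℝ)
    (hB : ∀ t, B t = ∑ j ∈ Finset.Icc 1 (8*s), β j t)
    (hderivα : ∀ t : ℝ, 0 ≤ t → HasDerivAt α (-(α t / 2) * (Γ t - B t) + δ t * B t) t)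
    (hderivδ : ∀ t : ℝ, 0 ≤ t →
      HasDerivAt δ ((α t / 2) * (Γ t - B t) + ((1/(s:ℝ) - α t - δ t)/2) * B t - δ t * Γ t) t)
    (hderivβ1 : ∀ t : ℝ, 0 ≤ t → HasDerivAt (β 1) (-(β 1 t) * R t + (α t / 2) * Γ t) t)
    (hderivβ : ∀ j, 2 ≤ j → j ≤ 8*s → ∀ t : ℝ, 0 ≤ t →
      HasDerivAt (β j) (β (j-1) t - β j t * R t) t)
    (T₁ : ℝ) (hT₁ : 0 ≤ T₁)
    (hΛ₂T₁ : α T₁ + δ T₁ / 16 + B T₁ / 4 ≤ 1)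
    (hαt : ∀ t : ℝ, T₁ ≤ t → 0 ≤ α t)
    (hδt : ∀ t : ℝ, T₁ ≤ t → 0 ≤ δ t)
    (hβt : ∀ t : ℝ, T₁ ≤ t → ∀ j, 1 ≤ j → j ≤ 8*s → 0 ≤ β j t)
    (hΓt : ∀ t : ℝ, T₁ ≤ t → 1 - 2/(s:ℝ) ≤ Γ t ∧ Γ t ≤ 1)
    (hRt : ∀ t : ℝ, T₁ ≤ t → 1 + 1/(4*(s:ℝ)) ≤ R t)
    (hBt : ∀ t : ℝ, T₁ ≤ t → B t ≤ 1/64) :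
    (∀ t : ℝ, T₁ ≤ t → ∀ j, 1 ≤ j → j ≤ 8*s →
      β j t ≤ 4 * Real.exp (-(t - T₁)/(8*(s:ℝ)))) ∧
    (∀ t : ℝ, T₁ ≤ t → B t ≤ 32*(s:ℝ) * Real.exp (-(t - T₁)/(8*(s:ℝ)))) ∧
    (∀ t : ℝ, T₁ + 64*(s:ℝ)^2 ≤ t → B t ≤ 32*(s:ℝ) * Real.exp (-(8*(s:ℝ)))) := by
  have hs' : (32 : ℝ) ≤ s := by exact_mod_cast hs
  have hβ : ∀ t, T₁ ≤ t → ∀ j ∈ Icc 1 (8 * s), 0 ≤ β j t :=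
    fun t ht j hj => hβt t ht j (mem_Icc.1 hj).1 (mem_Icc.1 hj).2
  have hB_nonneg : ∀ t, T₁ ≤ t → 0 ≤ B t := fun t ht => (hB t) ▸ sum_nonneg (hβ t ht)
  have hB_ge : ∀ t, T₁ ≤ t → ∑ j ∈ Ico 1 (8 * s), β j t ≤ B t := fun t ht =>
    (hB t) ▸ sum_le_sum_of_subset_of_nonneg Ico_subset_Icc_self fun j hj _ => hβ t ht j hj
  have hB' : ∀ t, 0 ≤ t →
      HasDerivAt B (α t / 2 * Γ t - B t * R t + ∑ j ∈ Ico 1 (8 * s), β j t) t := by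
    intro t ht
    rw [funext hB]
    exact hasDerivAt_sum_Icc_of_chain (by omega) (hderivβ1 t ht)
      fun j hj hjn => hderivβ j hj hjn t ht
  have hΛ : ∀ t, T₁ ≤ t → α t + δ t / 16 + B t / 4 ≤ exp (-(1 / (8 * s)) * (t - T₁)) :=
    fun t ht => (le_mul_exp_of_hasDerivAt_le_neg_mul (f := fun x => α x + δ x / 16 + B x / 4)
      (fun x hx => ((hderivα x (hT₁.trans hx)).add ((hderivδ x (hT₁.trans hx)).div_const 16)).add
        ((hB' x (hT₁.trans hx)).div_const 4))
      (fun x hx => lyapunov_deriv_le hs' (hαt x hx) (hδt x hx) (hB_nonneg x hx) (hBt x hx)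
        (hΓt x hx).1 (hRt x hx) (hB_ge x hx)) ht).trans
      (mul_le_of_le_one_left (exp_pos _).le hΛ₂T₁)
  have hB4 : ∀ t, T₁ ≤ t → B t ≤ 4 * exp (-(t - T₁) / (8 * s)) := fun t ht => by
    have hΛt := hΛ t ht
    rw [show -(1 / (8 * (s : ℝ))) * (t - T₁) = -(t - T₁) / (8 * s) by ring] at hΛt
    linarith [hαt t ht, hδt t ht]
  have hB32 : ∀ t, T₁ ≤ t → B t ≤ 32 * s * exp (-(t - T₁) / (8 * s)) :=
    fun t ht => (hB4 t ht).trans (by gcongr; linarith)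
  refine ⟨fun t ht j hj1 hj2 => ?_, hB32, fun t ht => ?_⟩
  · exact ((hB t) ▸ single_le_sum (f := (β · t)) (hβ t ht) (mem_Icc.2 ⟨hj1, hj2⟩)).trans
      (hB4 t ht)
  · have hexp : -(t - T₁) / (8 * s) ≤ -(8 * s) := by
      rw [neg_div, neg_le_neg_iff, le_div_iff₀ (by positivity)]
      nlinarith
    calc B t ≤ 32 * s * exp (-(t - T₁) / (8 * s)) := hB32 t (by nlinarith)
      _ ≤ 32 * s * exp (-(8 * s)) := by gcongr

theorem stmt_14
    (s : ℕ) (hs : 32 ≤ s)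
    (α δ : ℝ → ℝ) (β γ : ℕ → ℝ → ℝ) (B Γ u R : ℝ → ℝ)
    (hB : ∀ t, B t = ∑ j ∈ Finset.Icc 1 (8*s), β j t)
    (hΓ : ∀ t, Γ t = ∑ j ∈ Finset.Icc 1 (8*s), γ j t)
    (hu : ∀ t, u t = 1 - 1/(s:ℝ) - Γ t)
    (hR : ∀ t, R t = 1 + 1/(2*(s:ℝ)) - δ t / 2 - u t)
    (hderivα : ∀ t : ℝ, 0 ≤ t → HasDerivAt α (-(α t / 2) * (Γ t - B t) + δ t * B t) t)
    (hderivδ : ∀ t : ℝ, 0 ≤ t →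
      HasDerivAt δ ((α t / 2) * (Γ t - B t) + ((1/(s:ℝ) - α t - δ t)/2) * B t - δ t * Γ t) t)
    (hderivβ1 : ∀ t : ℝ, 0 ≤ t → HasDerivAt (β 1) (-(β 1 t) * R t + (α t / 2) * Γ t) t)
    (hderivβ : ∀ j, 2 ≤ j → j ≤ 8*s → ∀ t : ℝ, 0 ≤ t →
      HasDerivAt (β j) (β (j-1) t - β j t * R t) t)
    (hderivγ1 : ∀ t : ℝ, 0 ≤ t →
      HasDerivAt (γ 1) (-(γ 1 t) * R t + (1/(2*(s:ℝ)) - δ t / 2) * Γ t) t)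
    (hderivγ : ∀ j, 2 ≤ j → j ≤ 8*s → ∀ t : ℝ, 0 ≤ t →
      HasDerivAt (γ j) (γ (j-1) t - γ j t * R t) t)
    (T₁ : ℝ) (hT₁ : 0 ≤ T₁)
    (hΛ₂T₁ : α T₁ + δ T₁ / 16 + B T₁ / 4 ≤ 1)
    (hαt : ∀ t : ℝ, T₁ ≤ t → 0 ≤ α t)
    (hδt : ∀ t : ℝ, T₁ ≤ t → 0 ≤ δ t)
    (hβt : ∀ t : ℝ, T₁ ≤ t → ∀ j, 1 ≤ j → j ≤ 8*s → 0 ≤ β j t)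
    (hΓt : ∀ t : ℝ, T₁ ≤ t → 1 - 2/(s:ℝ) ≤ Γ t ∧ Γ t ≤ 1)
    (hRt : ∀ t : ℝ, T₁ ≤ t → 1 + 1/(4*(s:ℝ)) ≤ R t)
    (hBt : ∀ t : ℝ, T₁ ≤ t → B t ≤ 1/64) :
    (∀ t : ℝ, T₁ ≤ t → ∀ j, 1 ≤ j → j ≤ 8*s →
      β j t ≤ 4 * Real.exp (-(t - T₁)/(8*(s:ℝ)))) ∧
    (∀ t : ℝ, T₁ ≤ t → B t ≤ 32*(s:ℝ) * Real.exp (-(t - T₁)/(8*(s:ℝ)))) ∧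
    (∀ t : ℝ, T₁ + 64*(s:ℝ)^2 ≤ t → B t ≤ 32*(s:ℝ) * Real.exp (-(8*(s:ℝ)))) :=
  stmt_14_general s hs α δ β B Γ R hB hderivα hderivδ hderivβ1 hderivβ T₁ hT₁ hΛ₂T₁ hαt hδt hβt hΓt
    hRt hBt
end
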